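/- Let B be a deterministic k-way branching program of depth at most 2^h solving BT^h_2(k), with h ≥ 1 and k ≥ 2. Then every input I all of whose internal node functions f_i^I are quasigroups is thrifty, i.e., every variable queried along the computation path of I is a thrifty variable of I. -/

import Mathlib

/-! Framework: the tree evaluation problem and deterministic k-way branching programs.

The balanced binary tree of height `h` has nodes numbered heap-style `1, …, 2^h - 1`:
the root is node `1` and the children of node `i` are `2i` and `2i+1`.
Elements of `[k] = {1,…,k}` are represented by `Fin k` (the element `1 ∈ [k]`
corresponds to `(0 : Fin k)`). -/

/-- Node `i` is a leaf of the height-`h` balanced binary tree. -/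
def IsLeafNode (h i : ℕ) : Prop := 2 ^ (h - 1) ≤ i ∧ i < 2 ^ h

/-- Node `i` is an internal node of the height-`h` balanced binary tree. -/
def IsInternalNode (h i : ℕ) : Prop := 1 ≤ i ∧ i < 2 ^ (h - 1)

/-- An input to the height-`h` tree evaluation problem over `[k]`: a binary function on `[k]`
for each internal node and a value in `[k]` for each leaf (values at irrelevant indices
are ignored). -/
structure TEInput (h k : ℕ) where
  f : ℕ → Fin k → Fin k → Fin k
  leaf : ℕ → Fin k

/-- Auxiliary recursion (on fuel) computing node values. -/
def TEInput.valAux {h k : ℕ} (I : TEInput h k) : ℕ → ℕ → Fin k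
  | 0, i => I.leaf i
  | m + 1, i =>
      if 2 ^ (h - 1) ≤ i then I.leaf i
      else I.f i (I.valAux m (2 * i)) (I.valAux m (2 * i + 1))

/-- The value `v_i^I` of node `i`: the leaf value if `i` is a leaf, and
`f_i^I (v_{2i}^I, v_{2i+1}^I)` if `i` is an internal node. -/
def TEInput.val {h k : ℕ} (I : TEInput h k) (i : ℕ) : Fin k := I.valAux h i

/-- The input variables of the tree evaluation problem: one variable `f_i(a,b)` for each
internal node `i` and `a b ∈ [k]`, and one variable `l_i` for each leaf `i`. -/
inductive TEVar (h k : ℕ) where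
  | internal (i : ℕ) (hi : IsInternalNode h i) (a b : Fin k) : TEVar h k
  | leaf (i : ℕ) (hi : IsLeafNode h i) : TEVar h k

/-- The value of a variable under an input. -/
def TEInput.evalVar {h k : ℕ} (I : TEInput h k) : TEVar h k → Fin k
  | .internal i _ a b => I.f i a b
  | .leaf i _ => I.leaf i

/-- The node a variable belongs to. -/
def TEVar.node {h k : ℕ} : TEVar h k → ℕ
  | .internal i _ _ _ => i
  | .leaf i _ => i

/-- `X` is the thrifty `i` variable of input `I`: it is `f_i(v_{2i}^I, v_{2i+1}^I)`
if `i` is an internal node, and `l_i` if `i` is a leaf. -/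
def IsThriftyVarOf {h k : ℕ} (I : TEInput h k) (i : ℕ) : TEVar h k → Prop
  | .internal j _ a b => j = i ∧ a = I.val (2 * j) ∧ b = I.val (2 * j + 1)
  | .leaf j _ => j = i

/-- A deterministic `k`-way branching program with variables indexed by `V` and
output set `R`: a set of states (of cardinality `size`), a start state, each state
labeled either with a variable to query (non-output states, with `k` out-edges
labeled `1,…,k`) or with an output value (output sink states). -/
structure DetBP (V : Type) (k : ℕ) (R : Type) where
  size : ℕ
  start : Fin size
  label : Fin size → V ⊕ R
  next : Fin size → Fin k → Fin size

namespace DetBP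

variable {V : Type} {k : ℕ} {R : Type}

/-- One step of computation on input `x`: from a state querying variable `v`, follow
the out-edge labeled `x v`; output states are sinks. -/
def step (B : DetBP V k R) (x : V → Fin k) (s : Fin B.size) : Fin B.size :=
  match B.label s with
  | .inl v => B.next s (x v)
  | .inr _ => s

/-- The state of the computation path of `x` at time `t`. -/
def run (B : DetBP V k R) (x : V → Fin k) (t : ℕ) : Fin B.size :=
  (B.step x)^[t] B.start

/-- The depth of `B` is at most `D`: on every input, the computation path reaches an
output state within its first `D` states. -/
def DepthLE (B : DetBP V k R) (D : ℕ) : Prop :=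
  ∀ x : V → Fin k, ∃ t < D, (B.label (B.run x t)).isRight = true

/-- `B` solves the function tree evaluation problem `FT^h_2(k)`: on every input `I`, the
computation path ends in the output state labeled with the root value `v_1^I`. -/
def SolvesFT {h : ℕ} (B : DetBP (TEVar h k) k (Fin k)) : Prop :=
  ∀ I : TEInput h k, ∃ t, B.label (B.run I.evalVar t) = Sum.inr (I.val 1)

/-- `B` solves the decision tree evaluation problem `BT^h_2(k)`: on every input `I`, the
computation path ends in the output state labeled with whether `v_1^I = 1`
(the element `1 ∈ [k]` being `(0 : Fin k)`). -/
def SolvesBT {h : ℕ} (B : DetBP (TEVar h k) k Bool) : Prop :=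
  ∀ I : TEInput h k, ∃ t, B.label (B.run I.evalVar t) = Sum.inr (decide ((I.val 1 : Fin k).val = 0))

/-- `B` is thrifty: on every input `I`, every query `f_i(a,b)` made along the computation
path of `I` satisfies `a = v_{2i}^I` and `b = v_{2i+1}^I`. -/
def Thrifty {h : ℕ} (B : DetBP (TEVar h k) k R) : Prop :=
  ∀ (I : TEInput h k) (t i : ℕ) (hi : IsInternalNode h i) (a b : Fin k),
    B.label (B.run I.evalVar t) = Sum.inl (TEVar.internal i hi a b) →
    a = I.val (2 * i) ∧ b = I.val (2 * i + 1)

end DetBP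

/-! Every node `n` has its thrifty variable queried on the path of `I`. Otherwise resetting that
variable to any `c` leaves the path, hence the output, unchanged; yet, all node functions being
quasigroups, the root value is an injective function of `c`, so for `k ≥ 2` some `c` changes
whether the root value is `1`. These are `2^h - 1` distinct variables, while a path of depth at
most `2^h` makes at most `2^h - 1` queries, so they are all the queries it makes. -/

namespace DetBP

variable {V : Type} {k : ℕ} {R : Type} (B : DetBP V k R)

def Queries (x : V → Fin k) (v : V) : Prop :=
  ∃ t, B.label (B.run x t) = .inl v

theorem run_succ (x : V → Fin k) (t : ℕ) : B.run x (t + 1) = B.step x (B.run x t) :=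
  Function.iterate_succ_apply' _ _ _

theorem run_eq_of_forall_queries {x y : V → Fin k} (hxy : ∀ v, B.Queries x v → x v = y v)
    (t : ℕ) : B.run x t = B.run y t := by
  induction t with
  | zero => rfl
  | succ t ih =>
    rw [run_succ, run_succ, ← ih, step, step]
    split
    · next v hv => rw [hxy v ⟨t, hv⟩]
    · rfl

theorem run_eq_of_label_eq_inr {x : V → Fin k} {t s : ℕ} {r : R}
    (hr : B.label (B.run x t) = .inr r) (hts : t ≤ s) : B.run x s = B.run x t := by
  induction s, hts using Nat.le_induction with
  | base => rfl
  | succ s _ ih => rw [run_succ, ih, step, hr]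

theorem output_unique {x : V → Fin k} {t s : ℕ} {r r' : R}
    (hr : B.label (B.run x t) = .inr r) (hr' : B.label (B.run x s) = .inr r') : r = r' := by
  rcases le_total t s with hts | hst
  · rw [B.run_eq_of_label_eq_inr hr hts, hr] at hr'
    exact Sum.inr.inj hr'
  · rw [B.run_eq_of_label_eq_inr hr' hst, hr'] at hr
    exact (Sum.inr.inj hr).symm

theorem lt_of_label_eq_inl {x : V → Fin k} {t₀ t : ℕ} {r : R} {v : V}
    (hr : B.label (B.run x t₀) = .inr r) (hv : B.label (B.run x t) = .inl v) : t < t₀ := by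
  by_contra! hle
  rw [B.run_eq_of_label_eq_inr hr hle, hr] at hv
  exact Sum.inr_ne_inl hv

theorem queries_of_output_ne {x y : V → Fin k} {v : V} (hxy : ∀ w, w ≠ v → x w = y w)
    {t s : ℕ} {r r' : R} (hx : B.label (B.run x t) = .inr r)
    (hy : B.label (B.run y s) = .inr r') (hne : r ≠ r') : B.Queries x v := by
  by_contra hv
  have hrun : ∀ t, B.run x t = B.run y t :=
    B.run_eq_of_forall_queries fun w hw => hxy w fun h => hv (h ▸ hw)
  rw [← hrun] at hy
  exact hne (B.output_unique hx hy)

/-- A path that stops at time `t₀` makes at most `t₀` queries, so a set of at least `t₀`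
queried variables contains all of them. -/
theorem mem_of_queries_of_card_le {x : V → Fin k} {S : Finset V} {t₀ : ℕ} {r : R}
    (hS : ∀ v ∈ S, B.Queries x v) (hr : B.label (B.run x t₀) = .inr r) (hcard : t₀ ≤ S.card)
    {v : V} (hv : B.Queries x v) : v ∈ S := by
  choose τ hτ using hS
  obtain ⟨t, ht⟩ := hv
  obtain ⟨w, hw, htw⟩ := Finset.surj_on_of_inj_on_of_card_le τ
    (fun w hw => Finset.mem_range.2 (B.lt_of_label_eq_inl hr (hτ w hw)))
    (fun w₁ w₂ hw₁ hw₂ h => Sum.inl.inj ((hτ w₁ hw₁).symm.trans (h ▸ hτ w₂ hw₂)))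
    (by simpa using hcard) t (Finset.mem_range.2 (B.lt_of_label_eq_inl hr ht))
  rw [htw, hτ w hw] at ht
  exact Sum.inl.inj ht ▸ hw

end DetBP

/-- Node `n` lies in the subtree rooted at node `i` (heap numbering). -/
def InSubtree (n i : ℕ) : Prop := ∃ e, n / 2 ^ e = i

theorem InSubtree.refl (n : ℕ) : InSubtree n n := ⟨0, by simp⟩

theorem InSubtree.le {n i : ℕ} (h : InSubtree n i) : i ≤ n := by
  obtain ⟨e, rfl⟩ := h
  exact Nat.div_le_self _ _

theorem InSubtree.div_two {n i : ℕ} (h : InSubtree n i) : InSubtree n (i / 2) := by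
  obtain ⟨e, rfl⟩ := h
  exact ⟨e + 1, by rw [pow_succ, Nat.div_div_eq_div_mul]⟩

theorem inSubtree_one {n : ℕ} (hn : 1 ≤ n) : InSubtree n 1 :=
  ⟨Nat.log 2 n, Nat.div_eq_of_lt_le (by simpa using Nat.pow_log_le_self 2 (by omega))
    (by simpa [pow_succ, mul_comm] using Nat.lt_pow_succ_log_self one_lt_two n)⟩

/-- Of two distinct ancestors of `n`, the higher one is at most half the lower one, so they
cannot have the same parent. -/
theorem InSubtree.eq_of_div_two_eq {n a s : ℕ} (ha : InSubtree n a) (hs : InSubtree n s)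
    (has : a / 2 = s / 2) (hpos : 1 ≤ a / 2) : a = s := by
  obtain ⟨e, rfl⟩ := ha
  obtain ⟨e', rfl⟩ := hs
  wlog hee' : e ≤ e' generalizing e e'
  · exact (this e' (by omega) e has.symm (by omega)).symm
  obtain ⟨d, rfl⟩ := Nat.exists_eq_add_of_le hee'
  rcases d with _ | d
  · rfl
  · have : n / 2 ^ (e + (d + 1)) ≤ n / 2 ^ e / 2 := by
      rw [pow_add, ← Nat.div_div_eq_div_mul]
      exact Nat.div_le_div_left (Nat.le_self_pow (by omega) 2) (by norm_num)
    omega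

def IsQuasigroup {α : Type*} (f : α → α → α) : Prop :=
  ∀ a, Function.Bijective (f a) ∧ Function.Bijective (fun x => f x a)

theorem Fin.exists_decide_val_eq_zero_ne {α : Type*} {k : ℕ} {g : α → Fin k}
    (hg : Function.Surjective g) (hk : 2 ≤ k) (b : Bool) : ∃ c, decide ((g c).val = 0) ≠ b := by
  cases b
  · obtain ⟨c, hc⟩ := hg ⟨0, by omega⟩
    exact ⟨c, by simp [hc]⟩
  · obtain ⟨c, hc⟩ := hg ⟨1, hk⟩
    exact ⟨c, by simp [hc]⟩

namespace TEInput

variable {h k : ℕ}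

theorem valAux_succ (I : TEInput h k) (m i : ℕ) :
    I.valAux (m + 1) i =
      if 2 ^ (h - 1) ≤ i then I.leaf i
      else I.f i (I.valAux m (2 * i)) (I.valAux m (2 * i + 1)) := rfl

theorem valAux_succ_of_le (I : TEInput h k) {m i : ℕ} (hi : 2 ^ (h - 1) ≤ i * 2 ^ m) :
    I.valAux (m + 1) i = I.valAux m i := by
  induction m generalizing i with
  | zero => rw [valAux_succ, if_pos (by simpa using hi)]; rfl
  | succ m ih =>
    rw [valAux_succ I (m + 1) i, valAux_succ I m i]
    split_ifs
    · rfl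
    · rw [pow_succ] at hi
      rw [ih (i := 2 * i) (by linarith), ih (i := 2 * i + 1) (by nlinarith)]

theorem val_of_isLeafNode (I : TEInput h k) {i : ℕ} (hi : IsLeafNode h i) :
    I.val i = I.leaf i := by
  obtain ⟨h, rfl⟩ : ∃ h', h = h' + 1 :=
    Nat.exists_eq_succ_of_ne_zero (by rintro rfl; simp [IsLeafNode] at hi; omega)
  rw [val, valAux_succ, if_pos hi.1]

theorem val_of_isInternalNode (I : TEInput h k) {i : ℕ} (hi : IsInternalNode h i) :
    I.val i = I.f i (I.val (2 * i)) (I.val (2 * i + 1)) := by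
  obtain ⟨h, rfl⟩ : ∃ h', h = h' + 1 :=
    Nat.exists_eq_succ_of_ne_zero (by rintro rfl; simp [IsInternalNode] at hi; omega)
  have hle : ∀ j, 1 ≤ j → 2 ^ (h + 1 - 1) ≤ j * 2 ^ h := fun j hj => Nat.le_mul_of_pos_left _ hj
  rw [val, valAux_succ, if_neg (not_le.2 hi.2), val, val,
    I.valAux_succ_of_le (hle _ (by linarith [hi.1])), I.valAux_succ_of_le (hle _ (by omega))]

theorem val_eq_of_forall_ne (I J : TEInput h k) {n i : ℕ}
    (hIJ : ∀ j, j ≠ n → I.f j = J.f j ∧ I.leaf j = J.leaf j) (hi : ¬ InSubtree n i) :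
    I.val i = J.val i := by
  suffices ∀ m i, ¬ InSubtree n i → I.valAux m i = J.valAux m i from this h i hi
  intro m
  induction m with
  | zero => intro i hi; exact (hIJ i fun h => hi (h ▸ InSubtree.refl n)).2
  | succ m ih =>
    intro i hi
    obtain ⟨hf, hleaf⟩ := hIJ i fun h => hi (h ▸ InSubtree.refl n)
    have hl : ¬ InSubtree n (2 * i) := fun h => hi (by simpa using h.div_two)
    have hr : ¬ InSubtree n (2 * i + 1) := fun h => hi (by simpa [Nat.add_div] using h.div_two)
    rw [valAux_succ, valAux_succ, hf, hleaf, ih _ hl, ih _ hr]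

/-- The subtree of the sibling of each ancestor of `n` is untouched, so injectivity of the
quasigroup at the parent carries the difference one level up. -/
theorem val_ne_of_inSubtree (I₁ I₂ : TEInput h k) {n : ℕ} (hn : n < 2 ^ h)
    (hquasi : ∀ i, IsInternalNode h i → i ≠ n → IsQuasigroup (I₁.f i))
    (h12 : ∀ j, j ≠ n → I₁.f j = I₂.f j ∧ I₁.leaf j = I₂.leaf j)
    (hne : I₁.val n ≠ I₂.val n) {i : ℕ} (hi : InSubtree n i) (hi1 : 1 ≤ i) :
    I₁.val i ≠ I₂.val i := by
  obtain ⟨e, rfl⟩ := hi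
  induction e with
  | zero => simpa using hne
  | succ e ih =>
    have hdiv : n / 2 ^ (e + 1) = n / 2 ^ e / 2 := by rw [pow_succ, Nat.div_div_eq_div_mul]
    rw [hdiv] at hi1 ⊢
    have ha := ih (by omega)
    have han : n / 2 ^ e ≤ n := Nat.div_le_self _ _
    set p := n / 2 ^ e / 2
    have hp : IsInternalNode h p := by
      refine ⟨hi1, ?_⟩
      rcases h with _ | h
      · simp at hn; omega
      · rw [pow_succ] at hn; simp only [Nat.add_sub_cancel]; omega
    have hpn : p ≠ n := by omega
    obtain ⟨hf, -⟩ := h12 p hpn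
    rw [val_of_isInternalNode _ hp, val_of_isInternalNode _ hp, ← hf]
    have hsib : ∀ s, s / 2 = p → s ≠ n / 2 ^ e → I₁.val s = I₂.val s := fun s hs hsa =>
      val_eq_of_forall_ne I₁ I₂ h12 fun hs' => hsa ((InSubtree.eq_of_div_two_eq ⟨e, rfl⟩ hs'
        (by omega) (by omega)).symm)
    rcases Nat.even_or_odd' (n / 2 ^ e) with ⟨q, hq | hq⟩
    · have hqp : q = p := by omega
      rw [hsib (2 * p + 1) (by omega) (by omega)]
      exact fun hEq => ha (hq ▸ hqp ▸ ((hquasi p hp hpn) _).2.injective hEq)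
    · have hqp : q = p := by omega
      rw [hsib (2 * p) (by omega) (by omega)]
      exact fun hEq => ha (hq ▸ hqp ▸ ((hquasi p hp hpn) _).1.injective hEq)

def thriftyVar (I : TEInput h k) (n : ℕ) (hn : n ∈ Finset.Ico 1 (2 ^ h)) : TEVar h k :=
  if hi : n < 2 ^ (h - 1) then
    .internal n ⟨(Finset.mem_Ico.1 hn).1, hi⟩ (I.val (2 * n)) (I.val (2 * n + 1))
  else .leaf n ⟨not_lt.1 hi, (Finset.mem_Ico.1 hn).2⟩

section thriftyVar

variable (I : TEInput h k) {n : ℕ} (hn : n ∈ Finset.Ico 1 (2 ^ h))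

theorem node_thriftyVar : (I.thriftyVar n hn).node = n := by
  unfold thriftyVar
  split <;> rfl

theorem isThriftyVarOf_thriftyVar : IsThriftyVarOf I n (I.thriftyVar n hn) := by
  unfold thriftyVar
  split
  · exact ⟨rfl, rfl, rfl⟩
  · rfl

theorem evalVar_thriftyVar : I.evalVar (I.thriftyVar n hn) = I.val n := by
  unfold thriftyVar
  split
  · next hi => exact (val_of_isInternalNode I ⟨(Finset.mem_Ico.1 hn).1, hi⟩).symm
  · next hi => exact (val_of_isLeafNode I ⟨not_lt.1 hi, (Finset.mem_Ico.1 hn).2⟩).symm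

theorem thriftyVar_eq_of_forall_ne (J : TEInput h k)
    (hIJ : ∀ j, j ≠ n → J.f j = I.f j ∧ J.leaf j = I.leaf j) :
    J.thriftyVar n hn = I.thriftyVar n hn := by
  have hn1 := (Finset.mem_Ico.1 hn).1
  have hchild : ∀ j, n < j → J.val j = I.val j := fun j hj =>
    val_eq_of_forall_ne J I hIJ fun hsub => absurd hsub.le (by omega)
  unfold thriftyVar
  rw [hchild (2 * n) (by omega), hchild (2 * n + 1) (by omega)]

end thriftyVar

def updateVar (I : TEInput h k) : TEVar h k → Fin k → TEInput h k
  | .internal i _ a b, c =>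
      ⟨Function.update I.f i fun x y => if x = a ∧ y = b then c else I.f i x y, I.leaf⟩
  | .leaf i _, c => ⟨I.f, Function.update I.leaf i c⟩

section updateVar

variable (I : TEInput h k) (X : TEVar h k) (c : Fin k)

theorem evalVar_updateVar_self : (I.updateVar X c).evalVar X = c := by
  cases X <;> simp [updateVar, evalVar]

theorem evalVar_updateVar_of_ne {Y : TEVar h k} (hYX : Y ≠ X) :
    (I.updateVar X c).evalVar Y = I.evalVar Y := by
  cases X with
  | internal i hi a b =>
    cases Y with
    | internal j hj a' b' =>
      by_cases hji : j = i
      · subst hji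
        have hab : ¬(a' = a ∧ b' = b) := by rintro ⟨rfl, rfl⟩; exact hYX rfl
        simp [updateVar, evalVar, hab]
      · simp [updateVar, evalVar, hji]
    | leaf j hj => rfl
  | leaf i hi =>
    cases Y with
    | internal j hj a' b' => rfl
    | leaf j hj =>
      have hji : j ≠ i := by rintro rfl; exact hYX rfl
      simp [updateVar, evalVar, hji]

theorem updateVar_eq_of_ne_node {j : ℕ} (hj : j ≠ X.node) :
    (I.updateVar X c).f j = I.f j ∧ (I.updateVar X c).leaf j = I.leaf j := by
  cases X <;> simp_all [updateVar, TEVar.node]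

end updateVar

theorem val_updateVar_thriftyVar (I : TEInput h k) {n : ℕ} (hn : n ∈ Finset.Ico 1 (2 ^ h))
    (c : Fin k) : (I.updateVar (I.thriftyVar n hn) c).val n = c := by
  have hagree := fun j (hj : j ≠ n) =>
    I.updateVar_eq_of_ne_node (I.thriftyVar n hn) c (by rwa [node_thriftyVar])
  rw [← evalVar_thriftyVar _ hn, thriftyVar_eq_of_forall_ne I hn _ hagree, evalVar_updateVar_self]

end TEInput

theorem DetBP.SolvesBT.queries_thriftyVar {h k : ℕ} {B : DetBP (TEVar h k) k Bool}
    (hB : B.SolvesBT) (hk : 2 ≤ k) {I : TEInput h k}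
    (hquasi : ∀ i, IsInternalNode h i → IsQuasigroup (I.f i)) {n : ℕ}
    (hn : n ∈ Finset.Ico 1 (2 ^ h)) : B.Queries I.evalVar (I.thriftyVar n hn) := by
  set X := I.thriftyVar n hn
  have hagree : ∀ c, ∀ j, j ≠ n →
      (I.updateVar X c).f j = I.f j ∧ (I.updateVar X c).leaf j = I.leaf j :=
    fun c j hj => I.updateVar_eq_of_ne_node X c (by rwa [I.node_thriftyVar hn])
  have hinj : Function.Injective fun c => (I.updateVar X c).val 1 := by
    intro c₁ c₂ hroot
    by_contra hc
    refine TEInput.val_ne_of_inSubtree _ _ (Finset.mem_Ico.1 hn).2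
      (fun i hi hin => (hagree c₁ i hin).1 ▸ hquasi i hi)
      (fun j hj => ⟨(hagree c₁ j hj).1.trans (hagree c₂ j hj).1.symm,
        (hagree c₁ j hj).2.trans (hagree c₂ j hj).2.symm⟩)
      (by rwa [TEInput.val_updateVar_thriftyVar, TEInput.val_updateVar_thriftyVar])
      (inSubtree_one (Finset.mem_Ico.1 hn).1) le_rfl hroot
  obtain ⟨c, hc⟩ := Fin.exists_decide_val_eq_zero_ne (Finite.injective_iff_surjective.1 hinj) hk
    (decide ((I.val 1).val = 0))
  obtain ⟨t, ht⟩ := hB I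
  obtain ⟨s, hs⟩ := hB (I.updateVar X c)
  exact B.queries_of_output_ne (fun Y hY => (I.evalVar_updateVar_of_ne X c hY).symm) ht hs hc.symm

theorem stmt_4_general (h k : ℕ) (hk : 2 ≤ k) (B : DetBP (TEVar h k) k Bool)
    (hB : B.SolvesBT) (hdepth : B.DepthLE (2 ^ h)) (I : TEInput h k)
    (hquasi : ∀ i : ℕ, IsInternalNode h i → ∀ a : Fin k,
      Function.Bijective (I.f i a) ∧ Function.Bijective (fun x => I.f i x a)) :
    ∀ (t : ℕ) (X : TEVar h k),
      B.label (B.run I.evalVar t) = Sum.inl X → IsThriftyVarOf I X.node X := by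
  classical
  intro t X hX
  obtain ⟨t₀, ht₀, hout⟩ := hdepth I.evalVar
  obtain ⟨r, hr⟩ := Sum.isRight_iff.1 hout
  set S := (Finset.Ico 1 (2 ^ h)).attach.image fun n => I.thriftyVar n.1 n.2
  have hcard : S.card = 2 ^ h - 1 := by
    rw [Finset.card_image_of_injective _ fun n m hnm => Subtype.ext <| by
      simpa [TEInput.node_thriftyVar] using congrArg TEVar.node hnm]
    simp
  have hqueried : ∀ Y ∈ S, B.Queries I.evalVar Y := by
    simp only [S, Finset.mem_image]
    rintro _ ⟨n, -, rfl⟩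
    exact hB.queries_thriftyVar hk hquasi n.2
  obtain ⟨n, -, rfl⟩ := Finset.mem_image.1
    (B.mem_of_queries_of_card_le hqueried hr (by omega) ⟨t, hX⟩)
  rw [TEInput.node_thriftyVar]
  exact I.isThriftyVarOf_thriftyVar n.2

/-- If `B` is a deterministic `k`-way branching program of depth at most `2^h`
solving `BT^h_2(k)` (`h ≥ 1`, `k ≥ 2`), then every input `I` all of whose internal node
functions are quasigroups is thrifty: every variable queried along the computation path
of `I` is a thrifty variable of `I`. -/
theorem stmt_4 (h k : ℕ) (hh : 1 ≤ h) (hk : 2 ≤ k) (B : DetBP (TEVar h k) k Bool)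
    (hB : B.SolvesBT) (hdepth : B.DepthLE (2 ^ h)) (I : TEInput h k)
    (hquasi : ∀ i : ℕ, IsInternalNode h i → ∀ a : Fin k,
      Function.Bijective (I.f i a) ∧ Function.Bijective (fun x => I.f i x a)) :
    ∀ (t : ℕ) (X : TEVar h k),
      B.label (B.run I.evalVar t) = Sum.inl X → IsThriftyVarOf I X.node X :=
  stmt_4_general h k hk B hB hdepth I hquasi
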